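/- Let p ∈ ℂ[X] be a Shabat polynomial of degree n ≥ 2 whose coefficient of Xⁿ⁻¹ is zero, and let X₀ denote the sum of the distinct complex roots of p − 1. If X₀ ≠ 0, then the polynomial q defined by q(z) = p(X₀·z) is a Shabat polynomial in Zapponi form: the sum of the distinct roots of q − 1 equals 1 and the sum of the distinct roots of q + 1 equals −1. -/

import Mathlib

/-!
Write `A` and `B` for the sets of roots of `p - 1` and `p + 1`. Every root of `p'` lies in
`A ∪ B`, and a root of `p ∓ 1` of multiplicity `m` is a root of `p'` of multiplicity `m - 1`.
Summing the roots of `p'` with multiplicity therefore gives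
`Σ roots(p') = Σ roots(p - 1) - ΣA + Σ roots(p + 1) - ΣB`, and all three multiplicity-weighted
sums vanish because the coefficient of `X^(n-1)` in `p` does. Hence `ΣB = -ΣA = -X₀`, and the
substitution `z ↦ X₀ z` divides both sums of distinct roots by `X₀`.
-/

open Polynomial

namespace Polynomial

theorem nextCoeff_sub_C {R : Type*} [Ring R] {p : R[X]} (hp : 2 ≤ p.natDegree) (c : R) :
    (p - C c).nextCoeff = p.nextCoeff := by
  rw [nextCoeff_of_natDegree_pos (by rw [natDegree_sub_C]; omega),
    nextCoeff_of_natDegree_pos (by omega), natDegree_sub_C, coeff_sub, coeff_C,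
    if_neg (by omega), sub_zero]

theorem nextCoeff_derivative {R : Type*} [Semiring R] [IsAddTorsionFree R] (p : R[X]) :
    (derivative p).nextCoeff = p.nextCoeff * (p.natDegree - 1 : ℕ) := by
  rcases lt_or_ge p.natDegree 2 with h | h
  · have : (derivative p).natDegree = 0 := by rw [natDegree_derivative]; omega
    simp [nextCoeff, this, show p.natDegree - 1 = 0 by omega]
  · obtain ⟨m, hm⟩ : ∃ m, p.natDegree = m + 2 := ⟨p.natDegree - 2, by omega⟩
    rw [nextCoeff_of_natDegree_pos (by rw [natDegree_derivative]; omega),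
      nextCoeff_of_natDegree_pos (by omega), natDegree_derivative, coeff_derivative, hm]
    simp

variable {K : Type*} [Field K]

theorem Splits.roots_sum_eq_zero_of_nextCoeff_eq_zero {f : K[X]} (hf : f.Splits)
    (h : f.nextCoeff = 0) : f.roots.sum = 0 := by
  rcases eq_or_ne f 0 with rfl | hf0
  · simp
  have hsum := hf.nextCoeff_eq_neg_sum_roots_mul_leadingCoeff
  rw [h, eq_comm, neg_mul, neg_eq_zero, mul_eq_zero] at hsum
  exact hsum.resolve_left (leadingCoeff_ne_zero.2 hf0)

variable [DecidableEq K]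

theorem sum_toFinset_roots_rootMultiplicity_derivative_smul [CharZero K] (f : K[X]) :
    ∑ r ∈ f.roots.toFinset, (derivative f).rootMultiplicity r • r =
      f.roots.sum - f.roots.toFinset.sum id := by
  rw [Finset.sum_multiset_count f.roots, ← Finset.sum_sub_distrib]
  refine Finset.sum_congr rfl fun r hr => ?_
  obtain ⟨hf, hroot⟩ := mem_roots'.1 (Multiset.mem_toFinset.1 hr)
  rw [derivative_rootMultiplicity_of_root hroot, count_roots,
    sub_nsmul _ ((rootMultiplicity_pos hf).2 hroot), one_nsmul, id, sub_eq_add_neg]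

theorem sum_toFinset_roots_sub_C_add_sum_toFinset_roots_sub_C_eq_zero [IsAlgClosed K]
    [CharZero K] {p : K[X]} (hp : 2 ≤ p.natDegree) (hnext : p.nextCoeff = 0) {c₁ c₂ : K}
    (hc : c₁ ≠ c₂)
    (hcrit : ∀ z, (derivative p).eval z = 0 → p.eval z = c₁ ∨ p.eval z = c₂) :
    (p - C c₁).roots.toFinset.sum id + (p - C c₂).roots.toFinset.sum id = 0 := by
  have hp0 (c : K) : p - C c ≠ 0 :=
    ne_zero_of_natDegree_gt (n := 0) (by rw [natDegree_sub_C]; omega)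
  have mem (c z : K) : z ∈ (p - C c).roots.toFinset ↔ p.eval z = c := by
    simp [mem_roots (hp0 c), sub_eq_zero]
  have hdisj : Disjoint (p - C c₁).roots.toFinset (p - C c₂).roots.toFinset :=
    Finset.disjoint_left.2 fun z h₁ h₂ =>
      hc (((mem c₁ z).1 h₁).symm.trans ((mem c₂ z).1 h₂))
  have hcover : (derivative p).roots.toFinset ⊆
      (p - C c₁).roots.toFinset ∪ (p - C c₂).roots.toFinset := by
    intro z hz
    have hd : derivative p ≠ 0 := derivative_ne_zero.2 (by omega)
    rcases hcrit z ((mem_roots hd).1 (Multiset.mem_toFinset.1 hz)) with h | h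
    exacts [Finset.mem_union_left _ ((mem c₁ z).2 h), Finset.mem_union_right _ ((mem c₂ z).2 h)]
  have hpart (c : K) : ∑ r ∈ (p - C c).roots.toFinset, (derivative p).roots.count r • r =
      -(p - C c).roots.toFinset.sum id := by
    simp only [count_roots]
    have hderiv : derivative (p - C c) = derivative p := by
      rw [derivative_sub, derivative_C, sub_zero]
    rw [← hderiv, sum_toFinset_roots_rootMultiplicity_derivative_smul,
      (IsAlgClosed.splits _).roots_sum_eq_zero_of_nextCoeff_eq_zero
        (by rw [nextCoeff_sub_C hp, hnext]), zero_sub]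
  have hderiv_sum := Finset.sum_multiset_count_of_subset _ _ hcover
  rw [(IsAlgClosed.splits _).roots_sum_eq_zero_of_nextCoeff_eq_zero
      (by rw [nextCoeff_derivative, hnext, zero_mul]),
    Finset.sum_union hdisj, hpart, hpart] at hderiv_sum
  linear_combination hderiv_sum

theorem mul_sum_toFinset_roots_comp_C_mul_X (f : K[X]) {a : K} (ha : a ≠ 0) :
    a * (f.comp (C a * X)).roots.toFinset.sum id = f.roots.toFinset.sum id := by
  have hmap := map_roots_comp_C_mul_X_add_C f a 0 ha.isUnit
  simp only [C_0, add_zero] at hmap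
  conv_rhs => rw [← hmap]
  rw [Multiset.toFinset_map, Finset.sum_image fun x _ y _ h => mul_left_cancel₀ ha h,
    Finset.mul_sum]
  rfl

end Polynomial

/-- If `p` is a Shabat polynomial of degree `n ≥ 2` with vanishing coefficient of
`X^(n-1)` and the sum `X₀` of the distinct roots of `p - 1` is nonzero, then
`q(z) = p(X₀ z)` is a Shabat polynomial in Zapponi form. -/
theorem shabat_rescale_zapponi
    (p : Polynomial ℂ) (n : ℕ) (hn : 2 ≤ n) (hdeg : p.natDegree = n)
    (hShabat : ∀ z : ℂ, (Polynomial.derivative p).eval z = 0 →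
      p.eval z = 1 ∨ p.eval z = -1)
    (hcoeff : p.coeff (n - 1) = 0)
    (X₀ : ℂ) (hX₀ : X₀ = ((p - 1).roots.toFinset.sum id)) (hne : X₀ ≠ 0)
    (q : Polynomial ℂ) (hq : ∀ z : ℂ, q.eval z = p.eval (X₀ * z)) :
    (2 ≤ q.natDegree) ∧
    (∀ z : ℂ, (Polynomial.derivative q).eval z = 0 →
      q.eval z = 1 ∨ q.eval z = -1) ∧
    ((q - 1).roots.toFinset.sum id) = 1 ∧
    ((q + 1).roots.toFinset.sum id) = -1 := by
  have hqp : q = p.comp (C X₀ * X) := Polynomial.funext fun z => by simp [hq]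
  have hnext : p.nextCoeff = 0 := by rw [nextCoeff_of_natDegree_pos (by omega), hdeg, hcoeff]
  have hbalance := sum_toFinset_roots_sub_C_add_sum_toFinset_roots_sub_C_eq_zero (hdeg ▸ hn)
    hnext (by norm_num : (1 : ℂ) ≠ -1) hShabat
  have hscale (c : ℂ) :
      X₀ * (q - C c).roots.toFinset.sum id = (p - C c).roots.toFinset.sum id := by
    rw [hqp, show p.comp (C X₀ * X) - C c = (p - C c).comp (C X₀ * X) by
      rw [sub_comp, C_comp]]
    exact mul_sum_toFinset_roots_comp_C_mul_X _ hne
  have hscale₁ := hscale 1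
  have hscale₂ := hscale (-1)
  simp only [map_one, map_neg, sub_neg_eq_add] at hbalance hscale₁ hscale₂
  refine ⟨?_, fun z hz => ?_, ?_, ?_⟩
  · rw [hqp, natDegree_comp, natDegree_C_mul_X X₀ hne, mul_one]
    omega
  · rw [hqp, derivative_comp] at hz
    simpa [hq, hne] using hShabat (X₀ * z) (by simpa [hne] using hz)
  · exact mul_left_cancel₀ hne (by rw [hscale₁, ← hX₀, mul_one])
  · exact mul_left_cancel₀ hne
      (by rw [hscale₂, mul_neg_one]; linear_combination hbalance + hX₀)
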